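/- arXiv:2401.06573 — 2 statements merged into one kernel-verified Lean document; each statement's English description precedes it below -/
import Mathlib

section
/- Let G be a non-complete connected graph on n vertices such that there exists a complete subgraph K_s on s vertices with the property that any two maximal cliques of G intersect exactly in K_s. Then κ(G) = s, f(G) = n − s, and d(G) = 2. -/
open MvPolynomial

/-- A vertex `v` is a *free* vertex of `G` if the induced subgraph of `G` on the
neighbourhood `N_G(v)` is complete. -/
def IsFreeVertex {V : Type} (G : SimpleGraph V) (v : V) : Prop :=
  ∀ u ∈ G.neighborSet v, ∀ w ∈ G.neighborSet v, u ≠ w → G.Adj u w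

/-- `f(G)`: the number of free vertices of `G`. -/
noncomputable def freeCount {V : Type} (G : SimpleGraph V) : ℕ :=
  Set.ncard {v | IsFreeVertex G v}

/-- `i(G)`: the number of isolated vertices of `G`. -/
noncomputable def isolatedCount {V : Type} (G : SimpleGraph V) : ℕ :=
  Set.ncard {v | ∀ u, ¬ G.Adj v u}

/-- The diameter of a connected component `c` of `G`: the maximal distance in `G` between
two vertices of `c`. -/
noncomputable def compDiam {V : Type} (G : SimpleGraph V) (c : G.ConnectedComponent) : ℕ :=
  sSup {d | ∃ u w : V, G.connectedComponentMk u = c ∧ G.connectedComponentMk w = c ∧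
    G.dist u w = d}

/-- `d(G) = i(G) + Σᵢ diam(Gᵢ)`: the number of isolated vertices of `G` plus the sum of the
diameters of the connected components of `G`. -/
noncomputable def dVal {V : Type} (G : SimpleGraph V) : ℕ :=
  isolatedCount G + ∑ᶠ c : G.ConnectedComponent, compDiam G c

/-- `t(G)`: the number of connected components of `G`. -/
noncomputable def numComponents {V : Type} (G : SimpleGraph V) : ℕ :=
  Nat.card G.ConnectedComponent

/-- The vertex-connectivity `κ(G)`: the minimum cardinality of a set `T` of vertices such
that `G − T` is disconnected (i.e. has two vertices not joined by any path). -/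
noncomputable def kappaVal {V : Type} (G : SimpleGraph V) : ℕ :=
  sInf {r | ∃ T : Set V, T.ncard = r ∧ ¬ (G.induce Tᶜ).Preconnected}

/-- `G_v`: the graph with `V(G_v) = V(G)` and
`E(G_v) = E(G) ∪ {{u,w} : u, w ∈ N_G(v)}`. -/
def cliqueCompletion {V : Type} (G : SimpleGraph V) (v : V) : SimpleGraph V where
  Adj u w := G.Adj u w ∨ (u ≠ w ∧ G.Adj v u ∧ G.Adj v w)
  symm := by
    constructor
    intro a b h
    rcases h with h | ⟨hne, h1, h2⟩
    · exact Or.inl h.symm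
    · exact Or.inr ⟨hne.symm, h2, h1⟩
  loopless := by
    constructor
    intro a h
    rcases h with h | ⟨hne, _, _⟩
    · exact G.ne_of_adj h rfl
    · exact hne rfl

/-- `G − v`: the induced subgraph of `G` on `V(G) ∖ {v}`. -/
def deleteVertex {V : Type} (G : SimpleGraph V) (v : V) : SimpleGraph {u : V | u ≠ v} :=
  G.induce {u : V | u ≠ v}

/-- `G` is a disjoint union of complete graphs, i.e. every connected component of `G`
is a complete graph. -/
def IsDisjointUnionOfCompletes {V : Type} (G : SimpleGraph V) : Prop :=
  ∀ u w : V, G.Reachable u w → u = w ∨ G.Adj u w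

/-- The generalized binomial edge ideal `J_{K_m,G} ⊆ S = K[x_{ij} : i ∈ [m], j ∈ [n]]` of a
graph `G` on `[n]`: the ideal generated by the 2-minors
`x_{ik}x_{jl} − x_{il}x_{jk}` for `1 ≤ i < j ≤ m` and edges `{k,l}` of `G` with `k < l`. -/
noncomputable def genBinomialEdgeIdeal (K : Type) [Field K] (m n : ℕ)
    (G : SimpleGraph (Fin n)) : Ideal (MvPolynomial (Fin m × Fin n) K) :=
  Ideal.span {f | ∃ (i j : Fin m) (k l : Fin n), i < j ∧ k < l ∧ G.Adj k l ∧
    f = X (i, k) * X (j, l) - X (i, l) * X (j, k)}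

/-- The depth of `S/J` with respect to the maximal homogeneous ideal
`𝔪 = (x_s : s ∈ σ)` of the polynomial ring `S = K[x_s : s ∈ σ]`: the supremum of the
lengths of `S/J`-regular sequences consisting of elements of `𝔪`. -/
noncomputable def quotDepth (K : Type) [Field K] {σ : Type} (J : Ideal (MvPolynomial σ K)) : ℕ :=
  sSup {r | ∃ rs : List (MvPolynomial σ K), rs.length = r ∧
    (∀ f ∈ rs, f ∈ Ideal.span (Set.range (X : σ → MvPolynomial σ K))) ∧
    RingTheory.Sequence.IsRegular (MvPolynomial σ K ⧸ J) rs}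

/-- A *maximal clique* of `G`: a set of vertices inducing a complete subgraph, maximal
under inclusion among such sets. -/
def IsMaxClique {V : Type} (G : SimpleGraph V) (C : Set V) : Prop :=
  G.IsClique C ∧ ∀ D : Set V, G.IsClique D → C ⊆ D → D = C


/-! Since `G` is not complete it has two distinct maximal cliques, so `A` lies in every maximal
clique and each vertex of `A` is adjacent to every other vertex. A vertex outside `A` lies in a
single maximal clique, which contains all its neighbours. Hence walks in `G − A` never leave a
maximal clique, so `G − A` is disconnected while removing fewer vertices leaves a vertex of `A`
adjacent to all the rest; the free vertices are exactly those outside `A`; and a vertex of `A`,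
which exists because `G` is connected, is within distance one of everything. -/

open SimpleGraph

variable {V : Type} {G : SimpleGraph V}

lemma exists_isMaxClique_superset [Finite V] {S : Set V} (hS : G.IsClique S) :
    ∃ C, IsMaxClique G C ∧ S ⊆ C := by
  obtain ⟨C, hC, hmax⟩ := Set.Finite.exists_maximalFor id {D | G.IsClique D ∧ S ⊆ D}
    (Set.toFinite _) ⟨S, hS, subset_rfl⟩
  refine ⟨C, ⟨hC.1, fun D hD hCD => ?_⟩, hC.2⟩
  exact le_antisymm (hmax ⟨hD, hC.2.trans hCD⟩ hCD) hCD

lemma exists_isMaxClique_mem [Finite V] (v : V) : ∃ C, IsMaxClique G C ∧ v ∈ C := by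
  obtain ⟨C, hC, hvC⟩ := exists_isMaxClique_superset (G.isClique_singleton v)
  exact ⟨C, hC, hvC rfl⟩

lemma exists_ne_isMaxClique_of_ne_top [Finite V] (hG : G ≠ ⊤) :
    ∃ C D, IsMaxClique G C ∧ IsMaxClique G D ∧ C ≠ D := by
  obtain ⟨u, w, huw, hadj⟩ := ne_top_iff_exists_not_adj.mp hG
  obtain ⟨C, hC, huC⟩ := exists_isMaxClique_mem (G := G) u
  obtain ⟨D, hD, hwD⟩ := exists_isMaxClique_mem (G := G) w
  exact ⟨C, D, hC, hD, by rintro rfl; exact hadj (hC.1 huC hwD huw)⟩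

lemma preconnected_of_forall_adj {W : Type*} {H : SimpleGraph W} {a : W}
    (ha : ∀ v, v ≠ a → H.Adj v a) : H.Preconnected := by
  have reach (v : W) : H.Reachable v a := by
    rcases eq_or_ne v a with rfl | hva
    · rfl
    · exact (ha v hva).reachable
  exact fun u w => (reach u).trans (reach w).symm

lemma dist_le_two_of_forall_adj {a : V} (ha : ∀ v, v ≠ a → G.Adj v a) (u w : V) :
    G.dist u w ≤ 2 := by
  rcases eq_or_ne u a with rfl | hu
  · rcases eq_or_ne w u with rfl | hw
    · simp
    · exact (dist_eq_one_iff_adj.mpr (ha w hw).symm).le.trans one_le_two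
  rcases eq_or_ne w a with rfl | hw
  · exact (dist_eq_one_iff_adj.mpr (ha u hu)).le.trans one_le_two
  · exact dist_le ((Walk.nil.cons (ha w hw).symm).cons (ha u hu))

lemma kappaVal_eq_ncard [Finite V] {A : Set V} (hsep : ¬ (G.induce Aᶜ).Preconnected)
    (hA : ∀ a ∈ A, ∀ v, v ≠ a → G.Adj v a) : kappaVal G = A.ncard := by
  refine le_antisymm (Nat.sInf_le ⟨A, rfl, hsep⟩) (le_csInf ⟨_, A, rfl, hsep⟩ ?_)
  rintro _ ⟨T, rfl, hT⟩
  by_contra! hlt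
  obtain ⟨a, haA, haT⟩ := Set.exists_mem_notMem_of_ncard_lt_ncard hlt
  exact hT (preconnected_of_forall_adj (a := ⟨a, haT⟩)
    fun v hv => hA a haA v fun h => hv (Subtype.ext h))

lemma isolatedCount_eq_zero_of_forall_adj [Nontrivial V] {a : V}
    (ha : ∀ v, v ≠ a → G.Adj v a) : isolatedCount G = 0 := by
  have hnbr (v : V) : ∃ x, G.Adj v x := by
    rcases eq_or_ne v a with rfl | hva
    · obtain ⟨b, hb⟩ := exists_ne v
      exact ⟨b, (ha b hb).symm⟩
    · exact ⟨a, ha v hva⟩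
  simp only [isolatedCount, ← not_exists, hnbr, not_true_eq_false, Set.ofPred_false,
    Set.ncard_empty]

lemma dVal_eq_two_of_forall_adj [Finite V] {a : V} (ha : ∀ v, v ≠ a → G.Adj v a)
    (hG : G ≠ ⊤) : dVal G = 2 := by
  obtain ⟨u, w, huw, hnadj⟩ := ne_top_iff_exists_not_adj.mp hG
  have : Nontrivial V := ⟨u, w, huw⟩
  have hpre : G.Preconnected := preconnected_of_forall_adj ha
  have hdist : G.dist u w = 2 := by
    have h0 : G.dist u w ≠ 0 := fun h => huw ((hpre u w).dist_eq_zero_iff.mp h)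
    have h1 : G.dist u w ≠ 1 := fun h => hnadj (dist_eq_one_iff_adj.mp h)
    have := dist_le_two_of_forall_adj ha u w
    omega
  have := hpre.subsingleton_connectedComponent
  let : Unique G.ConnectedComponent := uniqueOfSubsingleton (G.connectedComponentMk a)
  have hdiam : compDiam G default = 2 := by
    have hmem : 2 ∈ {d | ∃ u w : V, G.connectedComponentMk u = default ∧
        G.connectedComponentMk w = default ∧ G.dist u w = d} :=
      ⟨u, w, Subsingleton.elim _ _, Subsingleton.elim _ _, hdist⟩
    have hbound : ∀ d ∈ {d | ∃ u w : V, G.connectedComponentMk u = default ∧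
        G.connectedComponentMk w = default ∧ G.dist u w = d}, d ≤ 2 := by
      rintro _ ⟨u, w, -, -, rfl⟩
      exact dist_le_two_of_forall_adj ha u w
    exact le_antisymm (csSup_le ⟨2, hmem⟩ hbound) (le_csSup ⟨2, hbound⟩ hmem)
  rw [dVal, isolatedCount_eq_zero_of_forall_adj ha, finsum_unique, hdiam]

def MaxCliquesMeetIn (G : SimpleGraph V) (A : Set V) : Prop :=
  ∀ C D, IsMaxClique G C → IsMaxClique G D → C ≠ D → C ∩ D = A

namespace MaxCliquesMeetIn

variable {A C : Set V} (h : MaxCliquesMeetIn G A)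
include h

lemma sdiff_nonempty {D : Set V} (hC : IsMaxClique G C) (hD : IsMaxClique G D) (hCD : C ≠ D) :
    (C \ A).Nonempty :=
  Set.sdiff_nonempty.mpr fun hCA =>
    hCD (hC.2 D hD.1 (hCA.trans (h C D hC hD hCD ▸ Set.inter_subset_right))).symm

variable [Finite V]

lemma subset (hG : G ≠ ⊤) (hC : IsMaxClique G C) : A ⊆ C := by
  obtain ⟨D, E, hD, hE, hDE⟩ := exists_ne_isMaxClique_of_ne_top hG
  rcases eq_or_ne C D with rfl | hCD
  · exact h C E hC hE hDE ▸ Set.inter_subset_left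
  · exact h C D hC hD hCD ▸ Set.inter_subset_left

lemma adj_of_mem (hG : G ≠ ⊤) {a v : V} (ha : a ∈ A) (hva : v ≠ a) : G.Adj v a := by
  obtain ⟨C, hC, hvC⟩ := exists_isMaxClique_mem (G := G) v
  exact hC.1 hvC (h.subset hG hC ha) hva

/-- A maximal clique containing the edge `uw` meets `C` in `u ∉ A`, so it is `C`. -/
lemma mem_of_adj (hC : IsMaxClique G C) {u w : V} (huC : u ∈ C) (huA : u ∉ A)
    (huw : G.Adj u w) : w ∈ C := by
  obtain ⟨E, hE, huwE⟩ := exists_isMaxClique_superset (isClique_pair.mpr fun _ => huw)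
  rcases eq_or_ne E C with rfl | hEC
  · exact huwE (by simp)
  · exact absurd (h E C hE hC hEC ▸ ⟨huwE (by simp), huC⟩) huA

lemma mem_of_reachable_induce_compl (hC : IsMaxClique G C) {x y : ↥Aᶜ}
    (hxy : (G.induce Aᶜ).Reachable x y) (hx : (x : V) ∈ C) : (y : V) ∈ C := by
  obtain ⟨p⟩ := hxy
  induction p with
  | nil => exact hx
  | @cons x z y hxz _ ih => exact ih (h.mem_of_adj hC hx x.2 hxz)

lemma not_preconnected_induce_compl (hG : G ≠ ⊤) : ¬ (G.induce Aᶜ).Preconnected := by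
  obtain ⟨C, D, hC, hD, hCD⟩ := exists_ne_isMaxClique_of_ne_top hG
  obtain ⟨x, hxC, hxA⟩ := h.sdiff_nonempty hC hD hCD
  obtain ⟨y, hyD, hyA⟩ := h.sdiff_nonempty hD hC hCD.symm
  intro hpre
  have hyC := h.mem_of_reachable_induce_compl hC (hpre ⟨x, hxA⟩ ⟨y, hyA⟩) hxC
  exact hyA (h C D hC hD hCD ▸ ⟨hyC, hyD⟩)

lemma setOf_isFreeVertex_eq_compl (hG : G ≠ ⊤) : {v | IsFreeVertex G v} = Aᶜ := by
  ext v
  refine ⟨fun hv hvA => h.not_preconnected_induce_compl hG fun x y => ?_, fun hvA => ?_⟩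
  · rcases eq_or_ne x y with rfl | hxy
    · rfl
    have hvx := h.adj_of_mem hG hvA (ne_of_mem_of_not_mem hvA x.2).symm
    have hvy := h.adj_of_mem hG hvA (ne_of_mem_of_not_mem hvA y.2).symm
    exact Adj.reachable (G := G.induce Aᶜ)
      (hv x hvx.symm y hvy.symm (Subtype.coe_ne_coe.mpr hxy))
  · obtain ⟨C, hC, hvC⟩ := exists_isMaxClique_mem (G := G) v
    exact fun u hu w hw huw =>
      hC.1 (h.mem_of_adj hC hvC hvA hu) (h.mem_of_adj hC hvC hvA hw) huw

end MaxCliquesMeetIn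

theorem H1_invariants_general (n s : ℕ) (G : SimpleGraph (Fin n)) (hconn : G.Connected) (hnc : G ≠ ⊤)
    (A : Set (Fin n)) (hAcard : A.ncard = s)
    (hint : ∀ C D : Set (Fin n), IsMaxClique G C → IsMaxClique G D → C ≠ D → C ∩ D = A) :
    kappaVal G = s ∧ freeCount G = n - s ∧ dVal G = 2 := by
  have hmeet : MaxCliquesMeetIn G A := hint
  have hsep := hmeet.not_preconnected_induce_compl hnc
  obtain ⟨a, ha⟩ : A.Nonempty := by
    refine Set.nonempty_iff_ne_empty.mpr fun hA => hsep ?_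
    rw [hA, Set.compl_empty]
    exact (induceUnivIso G).preconnected_iff.mpr hconn.preconnected
  refine ⟨hAcard ▸ kappaVal_eq_ncard hsep fun b hb _ => hmeet.adj_of_mem hnc hb, ?_,
    dVal_eq_two_of_forall_adj (fun _ => hmeet.adj_of_mem hnc ha) hnc⟩
  rw [freeCount, hmeet.setOf_isFreeVertex_eq_compl hnc, Set.ncard_compl, hAcard, Nat.card_fin]

/-- if `G` is a connected non-complete graph on `n` vertices such that any
two (distinct) maximal cliques of `G` intersect exactly in a fixed complete subgraph `K_s`
(with vertex set `A`, `|A| = s`), then `κ(G) = s`, `f(G) = n − s` and `d(G) = 2`. -/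
theorem H1_invariants (n s : ℕ) (G : SimpleGraph (Fin n)) (hconn : G.Connected) (hnc : G ≠ ⊤)
    (A : Set (Fin n)) (hA : G.IsClique A) (hAcard : A.ncard = s)
    (hint : ∀ C D : Set (Fin n), IsMaxClique G C → IsMaxClique G D → C ≠ D → C ∩ D = A) :
    kappaVal G = s ∧ freeCount G = n - s ∧ dVal G = 2 :=
  H1_invariants_general n s G hconn hnc A hAcard hint
end

section
/- Let G be a non-complete graph that is either a cycle C_n or of the form (C_n)_W for some subset W of the vertices of C_n (the iterated clique-completion of C_n at the vertices of W). Then the vertex-connectivity of G equals 2. -/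
open MvPolynomial

/-- The iterated clique-completion `G_W` of `G` at the vertices of a list `W`:
`G_[] = G` and `G_(v :: l) = (G_v)_l`. -/
def cliqueCompletionIter {V : Type} (G : SimpleGraph V) : List V → SimpleGraph V
  | [] => G
  | v :: l => cliqueCompletionIter (cliqueCompletion G v) l

/-!
The iterated completion `(C_n)_W` is `arcGraph W`, the graph in which distinct `u` and `w` are
adjacent exactly when one of the two open arcs `cIoo u w`, `cIoo w u` of the cycle lies in `W`:
completing `arcGraph S` at `v` joins `u` and `w` precisely when an arc between them is covered by
`S` together with `v`, since arcs meeting at `v` concatenate.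

In `arcGraph W`, deleting at most one vertex leaves one of the two arcs between any two remaining
vertices untouched, and stepping along that arc connects them; so `κ ≥ 2`. If `u` and `w` are not
adjacent, each arc between them contains a vertex outside `W`. Deleting these two vertices `a`, `b`
separates `u` from `w`: an edge joining the two sides of `{a, b}` would have `b` in one of its arcs
and `a` in the other, so neither arc lies in `W`.
-/

open Set

section CircularOrder

variable {α : Type*} [CircularOrder α] {a b c x y : α}

theorem sbtw_or_sbtw_of_ne (hab : a ≠ b) (hbc : b ≠ c) (hca : c ≠ a) :
    sbtw a b c ∨ sbtw c b a := by
  by_contra! h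
  rw [sbtw_iff_not_btw, sbtw_iff_not_btw, not_not, not_not] at h
  rcases h.2.antisymm h.1 with h | h | h <;> simp_all

theorem sbtw_of_sbtw_of_sbtw_rev (hx : sbtw a x b) (hy : sbtw b y a) : sbtw x b y :=
  sbtw_cyclic_right (sbtw_trans_right hy (sbtw_cyclic_left (sbtw_cyclic_left hx)))

theorem Set.cIoo_subset_cIoo_right (h : sbtw a b c) : cIoo a b ⊆ cIoo a c :=
  fun _ hx => sbtw_trans_right hx h

theorem Set.cIoo_subset_cIoo_left (h : sbtw a b c) : cIoo b c ⊆ cIoo a c :=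
  fun _ hx => sbtw_trans_left h hx

theorem Set.cIoo_subset_insert_union (h : sbtw a b c) :
    cIoo a c ⊆ insert b (cIoo a b ∪ cIoo b c) := by
  intro x hx
  rcases eq_or_ne x b with rfl | hxb
  · exact mem_insert _ _
  have hab : a ≠ b := by rintro rfl; exact sbtw_irrefl_left h
  have hxa : x ≠ a := by rintro rfl; exact sbtw_irrefl_left hx
  rcases sbtw_or_sbtw_of_ne hab hxb.symm hxa with h' | h'
  · exact Or.inr (Or.inr (sbtw_cyclic_left (sbtw_trans_left (sbtw_cyclic_right hx) h')))
  · exact Or.inr (Or.inl (sbtw_cyclic_right h'))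

end CircularOrder

section ArcGraph

variable {α : Type} [CircularOrder α] {S T : Set α} {u v w : α}

def arcGraph (S : Set α) : SimpleGraph α where
  Adj u w := u ≠ w ∧ (cIoo u w ⊆ S ∨ cIoo w u ⊆ S)
  symm := ⟨fun _ _ h => ⟨h.1.symm, h.2.symm⟩⟩
  loopless := ⟨fun _ h => h.1 rfl⟩

theorem arcGraph_adj : (arcGraph S).Adj u w ↔ u ≠ w ∧ (cIoo u w ⊆ S ∨ cIoo w u ⊆ S) :=
  Iff.rfl

theorem arcGraph_adj_of_cIoo_subset (huw : u ≠ w) (h : cIoo u w ⊆ S) : (arcGraph S).Adj u w :=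
  ⟨huw, Or.inl h⟩

theorem arcGraph_mono {S' : Set α} (h : S ⊆ S') : arcGraph S ≤ arcGraph S' :=
  fun _ _ huw => ⟨huw.1, huw.2.imp (·.trans h) (·.trans h)⟩

theorem cliqueCompletion_arcGraph_adj_of_cIoo_subset (huw : u ≠ w)
    (h : cIoo u w ⊆ insert v S) : (cliqueCompletion (arcGraph S) v).Adj u w := by
  by_cases hv : v ∈ cIoo u w
  · have hS : ∀ x ∈ cIoo u w, x ≠ v → x ∈ S := fun x hx hxv => (h hx).resolve_left hxv
    have huv : (arcGraph S).Adj u v := arcGraph_adj_of_cIoo_subset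
      (by rintro rfl; exact sbtw_irrefl_left hv)
      fun x hx => hS x (cIoo_subset_cIoo_right hv hx) (by rintro rfl; exact sbtw_irrefl_right hx)
    have hvw : (arcGraph S).Adj v w := arcGraph_adj_of_cIoo_subset
      (by rintro rfl; exact sbtw_irrefl_right hv)
      fun x hx => hS x (cIoo_subset_cIoo_left hv hx) (by rintro rfl; exact sbtw_irrefl_left hx)
    exact Or.inr ⟨huw, huv.symm, hvw⟩
  · exact Or.inl (arcGraph_adj_of_cIoo_subset huw
      fun x hx => (h hx).resolve_left fun hxv => hv (hxv ▸ hx))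

theorem cIoo_subset_insert_of_arcGraph_adj (huvw : sbtw u v w) (hvu : (arcGraph S).Adj v u)
    (hvw : (arcGraph S).Adj v w) : cIoo u w ⊆ insert v S ∨ cIoo w u ⊆ insert v S := by
  obtain ⟨-, hvu | hvu⟩ := hvu
  · exact Or.inr (((cIoo_subset_cIoo_left (sbtw_cyclic_left huvw)).trans hvu).trans
      (subset_insert v S))
  obtain ⟨-, hvw | hvw⟩ := hvw
  · exact Or.inl ((cIoo_subset_insert_union huvw).trans
      (insert_subset_insert (union_subset hvu hvw)))
  · exact Or.inr (((cIoo_subset_cIoo_right (sbtw_cyclic_right huvw)).trans hvw).trans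
      (subset_insert v S))

theorem cliqueCompletion_arcGraph (S : Set α) (v : α) :
    cliqueCompletion (arcGraph S) v = arcGraph (insert v S) := by
  refine le_antisymm (fun u w huw => ?_) fun u w ⟨huw, h⟩ => h.elim
    (cliqueCompletion_arcGraph_adj_of_cIoo_subset huw)
    fun h => (cliqueCompletion_arcGraph_adj_of_cIoo_subset huw.symm h).symm
  rcases huw with huw | ⟨huw, hvu, hvw⟩
  · exact arcGraph_mono (subset_insert v S) huw
  refine ⟨huw, ?_⟩
  rcases sbtw_or_sbtw_of_ne hvu.ne.symm hvw.ne huw.symm with h | h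
  · exact cIoo_subset_insert_of_arcGraph_adj h hvu hvw
  · exact (cIoo_subset_insert_of_arcGraph_adj h hvw hvu).symm

theorem cliqueCompletionIter_arcGraph (S : Set α) (l : List α) :
    cliqueCompletionIter (arcGraph S) l = arcGraph (S ∪ {x | x ∈ l}) := by
  induction l generalizing S with
  | nil => simp [cliqueCompletionIter]
  | cons v l ih =>
    rw [cliqueCompletionIter, cliqueCompletion_arcGraph, ih]
    congr 1
    ext x
    simp only [mem_union, mem_insert_iff, mem_ofPred_eq, List.mem_cons]
    tauto

theorem arcGraph_induce_reachable_of_disjoint [Finite α] (hu : u ∉ T) (hw : w ∉ T)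
    (hT : Disjoint (cIoo u w) T) :
    ((arcGraph S).induce Tᶜ).Reachable ⟨u, hu⟩ ⟨w, hw⟩ := by
  induction hn : (cIoo u w).ncard using Nat.strong_induction_on generalizing u w with
  | _ n ih =>
  obtain rfl | huw := eq_or_ne u w
  · rfl
  obtain hempty | ⟨x, hx⟩ := (cIoo u w).eq_empty_or_nonempty
  · exact (SimpleGraph.induce_adj.2 (arcGraph_adj_of_cIoo_subset huw
      (hempty.trans_subset (empty_subset S)))).reachable
  have hxT : x ∉ T := disjoint_left.1 hT hx
  have hux : cIoo u x ⊂ cIoo u w := (ssubset_iff_of_subset (cIoo_subset_cIoo_right hx)).2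
    ⟨x, hx, sbtw_irrefl_right⟩
  have hxw : cIoo x w ⊂ cIoo u w := (ssubset_iff_of_subset (cIoo_subset_cIoo_left hx)).2
    ⟨x, hx, sbtw_irrefl_left⟩
  exact (ih _ (hn ▸ ncard_lt_ncard hux) hu hxT (hT.mono_left hux.subset) rfl).trans
    (ih _ (hn ▸ ncard_lt_ncard hxw) hxT hw (hT.mono_left hxw.subset) rfl)

theorem arcGraph_induce_preconnected [Finite α] (S : Set α) (hT : T.Subsingleton) :
    ((arcGraph S).induce Tᶜ).Preconnected := by
  rintro ⟨u, hu⟩ ⟨w, hw⟩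
  by_cases h : Disjoint (cIoo u w) T
  · exact arcGraph_induce_reachable_of_disjoint hu hw h
  -- the two arcs between `u` and `w` are disjoint, so `T` misses one of them
  refine (arcGraph_induce_reachable_of_disjoint hw hu (disjoint_left.2 fun x hx hxT => ?_)).symm
  obtain ⟨t, ht, htT⟩ := not_disjoint_iff.1 h
  exact sbtw_asymm ht (hT hxT htT ▸ hx)

theorem arcGraph_induce_not_preconnected {a b x y : α} (ha : a ∉ S) (hb : b ∉ S)
    (hx : sbtw a x b) (hy : sbtw b y a) : ¬((arcGraph S).induce {a, b}ᶜ).Preconnected := by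
  have hmem : ∀ {q}, sbtw a q b ∨ sbtw b q a → q ∈ ({a, b} : Set α)ᶜ := by
    rintro q hq (rfl | rfl) <;> rcases hq with h | h <;>
      simp [sbtw_irrefl_left, sbtw_irrefl_right] at h
  have hstep : ∀ p q : ↥({a, b} : Set α)ᶜ, ((arcGraph S).induce {a, b}ᶜ).Adj p q →
      sbtw a p b → sbtw a q b := by
    intro p q hpq hp
    obtain ⟨-, hpq⟩ := SimpleGraph.induce_adj.1 hpq
    have hq := q.2
    simp only [mem_compl_iff, mem_insert_iff, mem_singleton_iff, not_or] at hq
    by_contra haqb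
    have hba : b ≠ a := by rintro rfl; exact sbtw_irrefl_left_right hp
    have hbqa : sbtw b q a := (sbtw_or_sbtw_of_ne (Ne.symm hq.1) hq.2 hba).resolve_left haqb
    rcases hpq with h | h
    · exact hb (h (sbtw_of_sbtw_of_sbtw_rev hp hbqa))
    · exact ha (h (sbtw_of_sbtw_of_sbtw_rev hbqa hp))
  intro hpre
  have hr := (SimpleGraph.reachable_iff_reflTransGen _ _).1
    (hpre ⟨x, hmem (.inl hx)⟩ ⟨y, hmem (.inr hy)⟩)
  suffices ∀ q, Relation.ReflTransGen ((arcGraph S).induce {a, b}ᶜ).Adj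
      ⟨x, hmem (.inl hx)⟩ q → sbtw a q b from sbtw_asymm hy (this _ hr)
  intro q hq
  induction hq with
  | refl => exact hx
  | tail _ hpq ih => exact hstep _ _ hpq ih

theorem exists_ncard_eq_two_not_preconnected_arcGraph (h : arcGraph S ≠ ⊤) :
    ∃ T : Set α, T.ncard = 2 ∧ ¬((arcGraph S).induce Tᶜ).Preconnected := by
  obtain ⟨u, w, huw, hadj⟩ := SimpleGraph.ne_top_iff_exists_not_adj.1 h
  simp only [arcGraph_adj, not_and, not_or, not_subset] at hadj
  obtain ⟨⟨a, hua, ha⟩, ⟨b, hwb, hb⟩⟩ := hadj huw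
  exact ⟨{a, b}, ncard_pair fun hab => sbtw_asymm hua (hab ▸ hwb),
    arcGraph_induce_not_preconnected ha hb (sbtw_of_sbtw_of_sbtw_rev hua hwb)
      (sbtw_of_sbtw_of_sbtw_rev hwb hua)⟩

theorem kappaVal_arcGraph [Finite α] (h : arcGraph S ≠ ⊤) : kappaVal (arcGraph S) = 2 := by
  refine IsLeast.csInf_eq ⟨exists_ncard_eq_two_not_preconnected_arcGraph h, ?_⟩
  rintro r ⟨T, rfl, hT⟩
  by_contra! hr
  exact hT (arcGraph_induce_preconnected S (ncard_le_one_iff_subsingleton.1 (by omega)))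

end ArcGraph

theorem Fin.cIoo_eq_empty_iff {n : ℕ} {u w : Fin n} (huw : u ≠ w) :
    cIoo u w = ∅ ↔ (w - u).val = 1 := by
  have hsub : (w - u).val = if u ≤ w then w.val - u.val else n + w.val - u.val := by
    split_ifs with h
    · exact Fin.coe_sub_iff_le.2 h
    · exact Fin.coe_sub_iff_lt.2 (not_le.1 h)
  simp only [eq_empty_iff_forall_notMem, mem_cIoo, Fin.sbtw_iff, hsub]
  constructor
  · intro h
    by_cases hu : u.val + 1 < n
    · have := h ⟨u.val + 1, hu⟩
      split_ifs <;> simp only [Fin.lt_def] at * <;> omega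
    · have := h ⟨0, by omega⟩
      split_ifs <;> simp only [Fin.lt_def] at * <;> omega
  · intro h x
    split_ifs at h <;> simp only [Fin.lt_def, Fin.le_def] at * <;> omega

theorem arcGraph_empty_eq_cycleGraph (n : ℕ) :
    arcGraph (∅ : Set (Fin n)) = SimpleGraph.cycleGraph n := by
  ext u w
  rw [arcGraph_adj, SimpleGraph.cycleGraph_adj', subset_empty_iff, subset_empty_iff]
  refine ⟨fun ⟨huw, h⟩ => ?_, fun h => ?_⟩
  · rwa [Fin.cIoo_eq_empty_iff huw, Fin.cIoo_eq_empty_iff huw.symm, or_comm] at h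
  · have huw : u ≠ w := by rintro rfl; rw [or_self, Fin.coe_sub_iff_le.2 le_rfl] at h; omega
    rwa [Fin.cIoo_eq_empty_iff huw, Fin.cIoo_eq_empty_iff huw.symm, or_comm, and_iff_right huw]

/-- Theorem 5.3: if `G` is non-complete and is either a cycle `C_n` or of
the form `(C_n)_W` for some subset `W` of the vertices of `C_n`, then `κ(G) = 2`. -/
theorem kappa_cycle_completion (n : ℕ) (G : SimpleGraph (Fin n)) (hnc : G ≠ ⊤)
    (h : G = SimpleGraph.cycleGraph n ∨
      ∃ l : List (Fin n), l.Nodup ∧ G = cliqueCompletionIter (SimpleGraph.cycleGraph n) l) :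
    kappaVal G = 2 := by
  obtain ⟨l, rfl⟩ : ∃ l, G = cliqueCompletionIter (SimpleGraph.cycleGraph n) l :=
    h.elim (⟨[], ·⟩) fun ⟨l, _, hl⟩ => ⟨l, hl⟩
  rw [← arcGraph_empty_eq_cycleGraph, cliqueCompletionIter_arcGraph] at hnc ⊢
  exact kappaVal_arcGraph hnc
end
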